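/- arXiv:1801.00724 — 3 statements merged into one kernel-verified Lean document; each statement's English description precedes it below -/
import Mathlib

section
/- Let (T, ⪯) be a directed set and {f_t : t ∈ T} an increasing family of lower semicontinuous functions on a topological space X (i.e., t₁ ⪯ t₂ implies f_{t₁} ≤ f_{t₂} pointwise). Let B ⊆ X be closed, let τ be a topology on X coarser than the original, assume each f_t is τ-lower semicontinuous, B is τ-closed, and there exists t₀ ∈ T such that f_{t₀} restricted to B is τ-inf-compact (all sublevel sets {x ∈ B : f_{t₀}(x) ≤ α} are τ-compact). Then inf_{x∈B} sup_{t∈T} f_t(x) = sup_{t∈T} inf_{x∈B} f_t(x), and moreover this common value is attained at some x̄ ∈ B (robust minimum). -/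
/-! The inequality `⨆ₜ ⨅_B fₜ ≤ ⨅_B ⨆ₜ fₜ` is general, so everything hinges on a point `x̄ ∈ B`
with `fₜ x̄ ≤ M := ⨆ₜ ⨅_B fₜ` for every `t`; if `M = ⊤` any point of `B` works. Otherwise fix a
real `a > M`. For `c > M` and any `t`, the closed sets `{x ∈ B | fₜ x ≤ c}` form a directed
family, and each of them meets the compact set `{x ∈ B | f_{t₀} x ≤ a}`, because
`⨅_B f_{t'} < min c a` for a common upper bound `t'` of `t` and `t₀`. Compactness then yields a
point in all of them. -/

section RobustMinimum

variable {X T α : Type*} {B : Set X}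

lemma iInf_iSup_eq_iSup_iInf_of_forall_le [CompleteLattice α] {f : T → X → α} {xb : X}
    (hxb : xb ∈ B) (hle : ∀ t, f t xb ≤ ⨆ t, ⨅ x ∈ B, f t x) :
    (⨅ x ∈ B, ⨆ t, f t x) = (⨆ t, ⨅ x ∈ B, f t x) ∧
      (⨆ t, f t xb) = ⨆ t, ⨅ x ∈ B, f t x := by
  have hge : (⨆ t, ⨅ x ∈ B, f t x) ≤ ⨅ x ∈ B, ⨆ t, f t x :=
    le_iInf₂ fun x hx => iSup_mono fun t => iInf₂_le x hx
  have hxb_le : (⨆ t, f t xb) ≤ ⨆ t, ⨅ x ∈ B, f t x := iSup_le hle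
  exact ⟨le_antisymm ((iInf₂_le xb hxb).trans hxb_le) hge,
    le_antisymm hxb_le (hge.trans (iInf₂_le xb hxb))⟩

lemma exists_mem_lt_of_iSup_iInf_lt [CompleteLinearOrder α] {f : T → X → α} {c : α}
    (hc : (⨆ t, ⨅ x ∈ B, f t x) < c) (t : T) : ∃ x ∈ B, f t x < c := by
  simpa only [iInf_lt_iff, exists_prop] using (le_iSup (fun t => ⨅ x ∈ B, f t x) t).trans_lt hc

variable [Preorder T] [IsDirectedOrder T] [TopologicalSpace X]

lemma exists_mem_forall_le_iSup_iInf_of_isCompact [CompleteLinearOrder α] [DenselyOrdered α]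
    [TopologicalSpace α] [ClosedIicTopology α] {f : T → X → α} (hf : Monotone f)
    (hlsc : ∀ t, LowerSemicontinuous (f t)) (hB : IsClosed B) {t₀ : T} {a : α}
    (ha : (⨆ t, ⨅ x ∈ B, f t x) < a) (hcpt : IsCompact {x | x ∈ B ∧ f t₀ x ≤ a}) :
    ∃ xb ∈ B, ∀ t, f t xb ≤ ⨆ t, ⨅ x ∈ B, f t x := by
  set M := ⨆ t, ⨅ x ∈ B, f t x
  let Z : T × {c : α // M < c} → Set X := fun i => {x | x ∈ B ∧ f i.1 x ≤ i.2}
  have : Nonempty (T × {c : α // M < c}) := ⟨(t₀, ⟨a, ha⟩)⟩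
  have hZcl : ∀ i, IsClosed (Z i) := fun i => hB.inter ((hlsc i.1).isClosed_preimage i.2)
  have hZdir : Directed (· ⊇ ·) Z := by
    rintro ⟨t₁, c₁, hc₁⟩ ⟨t₂, c₂, hc₂⟩
    obtain ⟨t, ht₁, ht₂⟩ := exists_ge_ge t₁ t₂
    refine ⟨(t, ⟨min c₁ c₂, lt_min hc₁ hc₂⟩), ?_, ?_⟩ <;> rintro x ⟨hxB, hx⟩
    · exact ⟨hxB, (hf ht₁ x).trans (hx.trans (min_le_left _ _))⟩
    · exact ⟨hxB, (hf ht₂ x).trans (hx.trans (min_le_right _ _))⟩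
  have hZmeet : ∀ i, ({x | x ∈ B ∧ f t₀ x ≤ a} ∩ Z i).Nonempty := by
    rintro ⟨t, c, hc⟩
    obtain ⟨t', ht₀, ht⟩ := exists_ge_ge t₀ t
    obtain ⟨x, hxB, hx⟩ := exists_mem_lt_of_iSup_iInf_lt (lt_min hc ha) t'
    exact ⟨x, ⟨hxB, (hf ht₀ x).trans (hx.le.trans (min_le_right _ _))⟩,
      hxB, (hf ht x).trans (hx.le.trans (min_le_left _ _))⟩
  obtain ⟨xb, ⟨hxbB, -⟩, hxbZ⟩ : ({x | x ∈ B ∧ f t₀ x ≤ a} ∩ ⋂ i, Z i).Nonempty := by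
    by_contra hempty
    obtain ⟨i, hi⟩ := hcpt.elim_directed_family_closed Z hZcl
      (Set.not_nonempty_iff_eq_empty.mp hempty) hZdir
    exact (hZmeet i).ne_empty hi
  refine ⟨xb, hxbB, fun t => le_of_forall_gt_imp_ge_of_dense fun c hc => ?_⟩
  exact (Set.mem_iInter.mp hxbZ (t, ⟨c, hc⟩)).2

lemma exists_mem_forall_le_iSup_iInf {f : T → X → EReal} (hf : Monotone f)
    (hlsc : ∀ t, LowerSemicontinuous (f t)) (hBne : B.Nonempty) (hB : IsClosed B) {t₀ : T}
    (hcpt : ∀ r : ℝ, IsCompact {x | x ∈ B ∧ f t₀ x ≤ r}) :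
    ∃ xb ∈ B, ∀ t, f t xb ≤ ⨆ t, ⨅ x ∈ B, f t x := by
  rcases eq_top_or_lt_top (⨆ t, ⨅ x ∈ B, f t x) with htop | hlt
  · obtain ⟨x, hx⟩ := hBne
    exact ⟨x, hx, fun t => htop ▸ le_top⟩
  · obtain ⟨a, ha, -⟩ := EReal.exists_between_coe_real hlt
    exact exists_mem_forall_le_iSup_iInf_of_isCompact hf hlsc hB ha (hcpt a)

end RobustMinimum

theorem stmt1_general {X : Type*} (τ : TopologicalSpace X)
    {T : Type*} [Preorder T]
    (hdir : ∀ a b : T, ∃ c : T, a ≤ c ∧ b ≤ c)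
    (f : T → X → EReal)
    (hlsc : ∀ t : T, @LowerSemicontinuous X EReal τ _ (f t))
    (hmono : ∀ s t : T, s ≤ t → ∀ x : X, f s x ≤ f t x)
    (B : Set X) (hBne : B.Nonempty) (hB : @IsClosed X τ B)
    (t₀ : T) (hcpt : ∀ α : ℝ, @IsCompact X τ {x | x ∈ B ∧ f t₀ x ≤ (α : EReal)}) :
    (⨅ x ∈ B, ⨆ t : T, f t x) = (⨆ t : T, ⨅ x ∈ B, f t x) ∧
      ∃ xb ∈ B, (⨆ t : T, f t xb) = ⨆ t : T, ⨅ x ∈ B, f t x := by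
  let := τ
  have : IsDirectedOrder T := ⟨hdir⟩
  obtain ⟨xb, hxb, hle⟩ :=
    exists_mem_forall_le_iSup_iInf (fun _ _ hst => hmono _ _ hst) hlsc hBne hB hcpt
  obtain ⟨hminimax, hattained⟩ := iInf_iSup_eq_iSup_iInf_of_forall_le hxb hle
  exact ⟨hminimax, xb, hxb, hattained⟩

/-- Sufficient condition for a robust minimum: an increasing family of `τ`-lsc functions
over a directed index set, on a `τ`-closed set `B`, with one member `τ`-inf-compact on `B`,
has a robust minimum on `B`. -/
theorem stmt1 {X : Type*} [t1 : TopologicalSpace X] (τ : TopologicalSpace X) (hτ : τ ≤ t1)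
    {T : Type*} [Preorder T]
    (hdir : ∀ a b : T, ∃ c : T, a ≤ c ∧ b ≤ c)
    (f : T → X → EReal)
    (hnbot : ∀ t x, f t x ≠ ⊥)
    (hlsc : ∀ t : T, @LowerSemicontinuous X EReal τ _ (f t))
    (hmono : ∀ s t : T, s ≤ t → ∀ x : X, f s x ≤ f t x)
    (B : Set X) (hBne : B.Nonempty) (hB : @IsClosed X τ B)
    (t₀ : T) (hcpt : ∀ α : ℝ, @IsCompact X τ {x | x ∈ B ∧ f t₀ x ≤ (α : EReal)}) :
    (⨅ x ∈ B, ⨆ t : T, f t x) = (⨆ t : T, ⨅ x ∈ B, f t x) ∧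
      ∃ xb ∈ B, (⨆ t : T, f t xb) = ⨆ t : T, ⨅ x ∈ B, f t x :=
  stmt1_general τ hdir f hlsc hmono B hBne hB t₀ hcpt
end

section
/- Let X be a finite-dimensional real normed space, let x*₁,…,x*ₖ ∈ X* with k > dim X + 1, and let λ₁,…,λₖ > 0 with x* = Σᵢ λᵢ x*ᵢ. Then there exist coefficients μ₁,…,μₖ ≥ 0 with x* = Σᵢ μᵢ x*ᵢ, Σᵢ μᵢ = Σᵢ λᵢ, at most k−1 of the μᵢ nonzero, and μᵢ ≤ 2λᵢ for every i. -/
/-!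
The vectors `(x*ᵢ, 1)` live in a space of dimension `dim X + 1 < k`, so they satisfy a nontrivial
relation `Σ αᵢ x*ᵢ = 0`, `Σ αᵢ = 0`. Moving `λ` along `α` to `λ + t α` changes neither
`Σ λᵢ x*ᵢ` nor `Σ λᵢ`; taking `|t| = min {λᵢ / |αᵢ| : αᵢ ≠ 0}` with the sign that kills the
minimizing coordinate keeps every coefficient in `[0, 2λᵢ]` and makes one of them vanish.
-/

open Finset

theorem exists_ne_zero_sum_smul_eq_zero_and_sum_eq_zero {K M ι : Type*} [Field K]
    [AddCommGroup M] [Module K M] [Module.Finite K M] [Fintype ι]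
    (hcard : Module.finrank K M + 1 < Fintype.card ι) (v : ι → M) :
    ∃ a : ι → K, a ≠ 0 ∧ ∑ i, a i • v i = 0 ∧ ∑ i, a i = 0 := by
  have hdep : ¬ LinearIndependent K (fun i ↦ (v i, (1 : K))) := fun h ↦ by
    have := h.fintype_card_le_finrank
    rw [Module.finrank_prod, Module.finrank_self] at this
    omega
  obtain ⟨a, hrel, i, hi⟩ := Fintype.not_linearIndependent_iff.mp hdep
  refine ⟨a, fun h ↦ hi (congrFun h i), ?_, ?_⟩
  · simpa [Prod.fst_sum] using congrArg Prod.fst hrel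
  · simpa [Prod.snd_sum] using congrArg Prod.snd hrel

theorem exists_abs_mul_le_and_add_mul_eq_zero {𝕜 ι : Type*} [Field 𝕜] [LinearOrder 𝕜]
    [IsStrictOrderedRing 𝕜] [Fintype ι] {lam : ι → 𝕜} (hlam : ∀ i, 0 ≤ lam i)
    {a : ι → 𝕜} (ha : a ≠ 0) :
    ∃ (t : 𝕜) (j : ι), (∀ i, |t * a i| ≤ lam i) ∧ lam j + t * a j = 0 := by
  have hsupp : (univ.filter fun i ↦ a i ≠ 0).Nonempty := by
    obtain ⟨i, hi⟩ := Function.ne_iff.mp ha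
    exact ⟨i, by simpa using hi⟩
  obtain ⟨j, hj, hmin⟩ := exists_min_image _ (fun i ↦ lam i / |a i|) hsupp
  have haj : a j ≠ 0 := (mem_filter.mp hj).2
  refine ⟨-lam j / a j, j, fun i ↦ ?_, by field_simp; ring⟩
  rcases eq_or_ne (a i) 0 with hai | hai
  · simpa [hai] using hlam i
  calc |-lam j / a j * a i| = lam j / |a j| * |a i| := by
        rw [abs_mul, abs_div, abs_neg, abs_of_nonneg (hlam j)]
    _ ≤ lam i / |a i| * |a i| :=
        mul_le_mul_of_nonneg_right (hmin i (by simpa using hai)) (abs_nonneg _)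
    _ = lam i := div_mul_cancel₀ _ (abs_ne_zero.mpr hai)

theorem card_filter_ne_zero_le_card_sub_one {M ι : Type*} [Zero M] [DecidableEq M] [Fintype ι]
    {f : ι → M} {j : ι} (hj : f j = 0) :
    (univ.filter fun i ↦ f i ≠ 0).card ≤ Fintype.card ι - 1 := by
  have := card_lt_univ_of_notMem (s := univ.filter fun i ↦ f i ≠ 0) (x := j) (by simpa using hj)
  omega

/-- Carathéodory-type reduction of multipliers: if `k > dim X + 1` and
`x* = Σᵢ λᵢ x*ᵢ` with all `λᵢ > 0`, then one can rewrite `x*` with nonnegative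
multipliers `μᵢ`, same total sum, at most `k − 1` of them nonzero, and `μᵢ ≤ 2 λᵢ`. -/
theorem stmt3 {X : Type*} [NormedAddCommGroup X] [NormedSpace ℝ X] [FiniteDimensional ℝ X]
    {k : ℕ} (hk : Module.finrank ℝ X + 1 < k)
    (p : Fin k → (X →L[ℝ] ℝ)) (lam : Fin k → ℝ) (hlam : ∀ i, 0 < lam i)
    (xs : X →L[ℝ] ℝ) (hx : xs = ∑ i, lam i • p i) :
    ∃ mu : Fin k → ℝ, (∀ i, 0 ≤ mu i) ∧ xs = ∑ i, mu i • p i ∧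
      (∑ i, mu i) = (∑ i, lam i) ∧
      (Finset.univ.filter fun i => mu i ≠ 0).card ≤ k - 1 ∧
      ∀ i, mu i ≤ 2 * lam i := by
  have hdual : Module.finrank ℝ (X →L[ℝ] ℝ) = Module.finrank ℝ X :=
    LinearMap.toContinuousLinearMap.finrank_eq.symm.trans Subspace.dual_finrank_eq
  obtain ⟨a, ha, hrel, hsum⟩ := exists_ne_zero_sum_smul_eq_zero_and_sum_eq_zero
    (by rwa [hdual, Fintype.card_fin]) p
  obtain ⟨t, j, hbound, hj⟩ := exists_abs_mul_le_and_add_mul_eq_zero (fun i ↦ (hlam i).le) ha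
  refine ⟨fun i ↦ lam i + t * a i, fun i ↦ ?_, ?_, ?_, ?_, fun i ↦ ?_⟩
  · linarith [neg_abs_le (t * a i), hbound i]
  · simp only [add_smul, mul_smul, sum_add_distrib, ← smul_sum, hrel, smul_zero, add_zero, hx]
  · rw [sum_add_distrib, ← mul_sum, hsum, mul_zero, add_zero]
  · simpa using card_filter_ne_zero_le_card_sub_one (f := fun i ↦ lam i + t * a i) hj
  · linarith [le_abs_self (t * a i), hbound i]
end

section
/- Let X be a normed space, D ⊆ X convex, and suppose h, g : X → ℝ∪{+∞} are convex with h(x) = g(x) for all x ∈ D. If x ∈ D lies in the relative interior of D (within aff D) and g is continuous at x relative to aff D, then ∂(h + δ_{aff D})(x) = ∂(g + δ_{aff D})(x). -/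
/-!
The subgradient inequality of a convex function at `x` extends from any point `z ≠ x` of a
segment `[x, y]` to its endpoint `y`, by convexity on `[x, y]`. For `y ∈ aff D`, the points of
`[x, y]` close to `x` lie in `D` because `x` is in the relative interior, and there the two
functions agree; off `aff D` both functions `· + δ_{aff D}` are `⊤`.
-/

open Filter Topology Classical

variable {X : Type*} [NormedAddCommGroup X] [NormedSpace ℝ X]

/-- Extended-real-valued indicator function of a set. -/
noncomputable def indicatorE (A : Set X) : X → EReal := fun y => if y ∈ A then (0 : EReal) else ⊤

/-- The convex subdifferential of an extended-real-valued function. -/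
def convexSubdiffE (h : X → EReal) (x : X) : Set (X →L[ℝ] ℝ) :=
  {p | ∀ y : X, ((p (y - x) : ℝ) : EReal) + h x ≤ h y}

/-- Convexity for an extended-real-valued function. -/
def ERealConvexOn (h : X → EReal) : Prop :=
  ∀ a b : X, ∀ θ : ℝ, 0 ≤ θ → θ ≤ 1 →
    h (θ • a + (1 - θ) • b) ≤ ((θ : ℝ) : EReal) * h a + (((1 - θ : ℝ)) : EReal) * h b

theorem exists_lineMap_mem_of_mem_intrinsicInterior {E : Type*} [AddCommGroup E] [Module ℝ E]
    [TopologicalSpace E] [IsTopologicalAddGroup E] [ContinuousSMul ℝ E] {D : Set E} {x y : E}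
    (hx : x ∈ intrinsicInterior ℝ D) (hy : y ∈ affineSpan ℝ D) :
    ∃ t : ℝ, 0 < t ∧ t ≤ 1 ∧ AffineMap.lineMap x y t ∈ D := by
  obtain ⟨x', hx', rfl⟩ := mem_intrinsicInterior.mp hx
  let γ : ℝ → affineSpan ℝ D := fun t => ⟨AffineMap.lineMap (x' : E) y t,
    AffineMap.lineMap_mem t x'.2 hy⟩
  have hγ : Continuous γ := (AffineMap.lineMap_continuous).subtype_mk _
  have hγ0 : γ 0 = x' := Subtype.ext (AffineMap.lineMap_apply_zero _ _)
  have hnear : ∀ᶠ t in 𝓝[>] (0 : ℝ), γ t ∈ interior ((↑) ⁻¹' D) :=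
    nhdsWithin_le_nhds (hγ.continuousAt.preimage_mem_nhds (hγ0 ▸ isOpen_interior.mem_nhds hx'))
  have hsmall : ∀ᶠ t in 𝓝[>] (0 : ℝ), t ≤ 1 :=
    nhdsWithin_le_nhds (eventually_le_nhds zero_lt_one)
  obtain ⟨t, ht, ht1, htD⟩ :=
    ((eventually_mem_nhdsWithin (s := Set.Ioi 0)).and (hsmall.and hnear)).exists
  exact ⟨t, ht, ht1, (interior_subset htD :)⟩

theorem ERealConvexOn.le_of_le_lineMap {ψ : X → EReal} (hψ : ERealConvexOn ψ) {x y : X}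
    {a c t : ℝ} (hx : ψ x = a) (ht0 : 0 < t) (ht1 : t ≤ 1)
    (hle : ((t * c + a : ℝ) : EReal) ≤ ψ (AffineMap.lineMap x y t)) :
    ((c + a : ℝ) : EReal) ≤ ψ y := by
  have hconv := hψ y x t ht0.le ht1
  rw [← add_comm, ← AffineMap.lineMap_apply_module, hx] at hconv
  induction hy : ψ y with
  | top => exact le_top
  | bot =>
    rw [hy, EReal.coe_mul_bot_of_pos ht0, EReal.bot_add] at hconv
    exact absurd (hle.trans hconv) (EReal.coe_ne_bot _ ∘ le_bot_iff.mp)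
  | coe r =>
    rw [hy, ← EReal.coe_mul, ← EReal.coe_mul, ← EReal.coe_add] at hconv
    have hreal : t * c + a ≤ t * r + (1 - t) * a := EReal.coe_le_coe_iff.mp (hle.trans hconv)
    exact_mod_cast (le_of_mul_le_mul_left (by linarith) ht0 : c + a ≤ r)

theorem convexSubdiffE_add_indicatorE_subset {φ ψ : X → EReal} (hψ : ERealConvexOn ψ)
    (hψbot : ∀ y, ψ y ≠ ⊥) {D : Set X} (hagree : ∀ y ∈ D, φ y = ψ y) {x : X}
    (hx : x ∈ intrinsicInterior ℝ D) {a : ℝ} (hφx : φ x = a) (hψx : ψ x = a) :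
    convexSubdiffE (fun y => φ y + indicatorE (affineSpan ℝ D : Set X) y) x ⊆
      convexSubdiffE (fun y => ψ y + indicatorE (affineSpan ℝ D : Set X) y) x := by
  intro p hp y
  have hxA : x ∈ (affineSpan ℝ D : Set X) := subset_affineSpan ℝ D (intrinsicInterior_subset hx)
  simp only [indicatorE, if_pos hxA, hψx, add_zero]
  by_cases hyA : y ∈ (affineSpan ℝ D : Set X)
  · obtain ⟨t, ht0, ht1, hzD⟩ := exists_lineMap_mem_of_mem_intrinsicInterior hx hyA
    have hpz := hp (AffineMap.lineMap x y t)
    rw [← vsub_eq_sub, AffineMap.lineMap_vsub_left, vsub_eq_sub, map_smul, smul_eq_mul] at hpz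
    simp only [indicatorE, if_pos hxA, if_pos (subset_affineSpan ℝ D hzD), add_zero, hφx,
      hagree _ hzD] at hpz
    rw [if_pos hyA, add_zero]
    exact_mod_cast hψ.le_of_le_lineMap hψx ht0 ht1 (by exact_mod_cast hpz)
  · simp only [if_neg hyA, EReal.add_top_of_ne_bot (hψbot y), le_top]

theorem stmt16_general (h g : X → EReal)
    (hconvh : ERealConvexOn h) (hconvg : ERealConvexOn g)
    (hboth : ∀ y : X, h y ≠ ⊥) (hbotg : ∀ y : X, g y ≠ ⊥)
    (D : Set X) (hDdom : ∀ y ∈ D, h y ≠ ⊤)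
    (hagree : ∀ y ∈ D, h y = g y)
    (x : X) (hx : x ∈ intrinsicInterior ℝ D) :
    convexSubdiffE (fun y => h y + indicatorE (affineSpan ℝ D : Set X) y) x =
      convexSubdiffE (fun y => g y + indicatorE (affineSpan ℝ D : Set X) y) x := by
  have hxD : x ∈ D := intrinsicInterior_subset hx
  obtain ⟨a, ha⟩ : ∃ a : ℝ, h x = a := ⟨_, (EReal.coe_toReal (hDdom x hxD) (hboth x)).symm⟩
  have hgx : g x = a := (hagree x hxD).symm.trans ha
  exact (convexSubdiffE_add_indicatorE_subset hconvg hbotg hagree hx ha hgx).antisymm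
    (convexSubdiffE_add_indicatorE_subset hconvh hboth (fun y hy => (hagree y hy).symm) hx hgx ha)

/-- Two convex functions agreeing on a convex set `D` have the same subdifferential relative
to `aff D` at relative interior points of `D` where `g` is continuous relative to `aff D`. -/
theorem stmt16 (h g : X → EReal)
    (hconvh : ERealConvexOn h) (hconvg : ERealConvexOn g)
    (hboth : ∀ y : X, h y ≠ ⊥) (hbotg : ∀ y : X, g y ≠ ⊥)
    (D : Set X) (hD : Convex ℝ D) (hDdom : ∀ y ∈ D, h y ≠ ⊤)
    (hagree : ∀ y ∈ D, h y = g y)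
    (x : X) (hx : x ∈ intrinsicInterior ℝ D)
    (hcont : ∃ U ∈ 𝓝 x, (∀ y ∈ U ∩ (affineSpan ℝ D : Set X), g y ≠ ⊤) ∧
      ContinuousOn (fun y => (g y).toReal) (U ∩ (affineSpan ℝ D : Set X))) :
    convexSubdiffE (fun y => h y + indicatorE (affineSpan ℝ D : Set X) y) x =
      convexSubdiffE (fun y => g y + indicatorE (affineSpan ℝ D : Set X) y) x :=
  stmt16_general h g hconvh hconvg hboth hbotg D hDdom hagree x hx
end
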